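/- Adding a single directed edge changes the minimum seed number by at most one: let (V, W, b) be an influence network and v₁ ≠ v₂ nodes with W(v₁,v₂) = 0. Let W' agree with W everywhere except W'(v₁,v₂) = w for some w > 0. If m and m' denote the minimum seed numbers of (V, W, b) and (V, W', b) respectively, then 0 ≤ m − m' ≤ 1. -/

import Mathlib

/-!
Influence barricade model: a finite vertex set `V : Finset ι`, edge weights
`W : ι → ι → ℝ` (an edge `u → v` exists iff `W u v > 0`), and barricade
factors `b : ι → ℝ`.  For a seed set `S ⊆ V`, the diffusion process is
`A 0 = S` and `A (t+1) = A t ∪ {u ∈ V : ∑ v ∈ A t, W v u ≥ b u}`.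
-/

open Finset

open Classical in
/-- One step of the diffusion process under the influence barricade model. -/
noncomputable def diffStep {ι : Type*} [DecidableEq ι] (V : Finset ι)
    (W : ι → ι → ℝ) (b : ι → ℝ) (A : Finset ι) : Finset ι :=
  A ∪ V.filter (fun u => b u ≤ ∑ v ∈ A, W v u)

/-- `activeSet V W b S t` is the set `A_t(S)` of nodes active at time `t`. -/
noncomputable def activeSet {ι : Type*} [DecidableEq ι] (V : Finset ι)
    (W : ι → ι → ℝ) (b : ι → ℝ) (S : Finset ι) : ℕ → Finset ι
  | 0 => S
  | t + 1 => diffStep V W b (activeSet V W b S t)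

/-- The final active set `A(S) = A_{|V|}(S)`. -/
noncomputable def finalActive {ι : Type*} [DecidableEq ι] (V : Finset ι)
    (W : ι → ι → ℝ) (b : ι → ℝ) (S : Finset ι) : Finset ι :=
  activeSet V W b S V.card

/-- `S` achieves full influenceability: every node is eventually active. -/
def FullInf {ι : Type*} [DecidableEq ι] (V : Finset ι) (W : ι → ι → ℝ)
    (b : ι → ℝ) (S : Finset ι) : Prop :=
  finalActive V W b S = V

/-- `σ(S)`: the number of nodes active at the end of the influence process. -/
noncomputable def sigmaInf {ι : Type*} [DecidableEq ι] (V : Finset ι)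
    (W : ι → ι → ℝ) (b : ι → ℝ) (S : Finset ι) : ℕ :=
  (finalActive V W b S).card

/-- The minimum seed number: the least cardinality of a seed set achieving
full influenceability. -/
noncomputable def minSeed {ι : Type*} [DecidableEq ι] (V : Finset ι)
    (W : ι → ι → ℝ) (b : ι → ℝ) : ℕ :=
  sInf {n | ∃ S : Finset ι, S ⊆ V ∧ S.card = n ∧ FullInf V W b S}

/-!
Diffusion is monotone in the seed set and in the weights, and the weights into a node that is
already seeded play no role. Hence a seed set that fully influences `W` also fully influences the
larger `W'`; conversely `W` and `W'` differ only on edges into `v₂`, so adding `v₂` to a seed set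
that fully influences `W'` gives one that fully influences `W`.
-/

section Diffusion

variable {ι : Type*} [DecidableEq ι] (V : Finset ι) (W : ι → ι → ℝ) (b : ι → ℝ)

lemma subset_activeSet (S : Finset ι) (t : ℕ) : S ⊆ activeSet V W b S t := by
  induction t with
  | zero => exact subset_refl S
  | succ t ih => exact ih.trans subset_union_left

lemma activeSet_subset {S : Finset ι} (hS : S ⊆ V) (t : ℕ) : activeSet V W b S t ⊆ V := by
  induction t with
  | zero => exact hS
  | succ t ih => exact union_subset ih (filter_subset _ _)

lemma fullInf_iff_subset_finalActive {S : Finset ι} (hS : S ⊆ V) :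
    FullInf V W b S ↔ V ⊆ finalActive V W b S :=
  ⟨fun h => h.symm.subset, (activeSet_subset V W b hS _).antisymm⟩

lemma fullInf_self : FullInf V W b V :=
  (fullInf_iff_subset_finalActive V W b subset_rfl).2 (subset_activeSet V W b V _)

/-- Weights into nodes of `S'` may decrease: those nodes are active from the start. -/
lemma activeSet_subset_activeSet {W' : ι → ι → ℝ} {S S' : Finset ι} (hS : S ⊆ S')
    (hWW' : ∀ u c, c ∉ S' → W u c ≤ W' u c) (hW' : ∀ u c, 0 ≤ W' u c) (t : ℕ) :
    activeSet V W b S t ⊆ activeSet V W' b S' t := by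
  induction t with
  | zero => exact hS
  | succ t ih =>
    refine union_subset (ih.trans subset_union_left) fun u hu => ?_
    obtain ⟨huV, hbu⟩ := mem_filter.1 hu
    by_cases huS' : u ∈ S'
    · exact subset_activeSet V W' b S' (t + 1) huS'
    refine mem_union_right _ (mem_filter.2 ⟨huV, ?_⟩)
    calc b u ≤ ∑ v ∈ activeSet V W b S t, W v u := hbu
      _ ≤ ∑ v ∈ activeSet V W b S t, W' v u := sum_le_sum fun v _ => hWW' v u huS'
      _ ≤ ∑ v ∈ activeSet V W' b S' t, W' v u :=
          sum_le_sum_of_subset_of_nonneg ih fun v _ _ => hW' v u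

lemma FullInf.mono {W' : ι → ι → ℝ} {S S' : Finset ι} (h : FullInf V W b S) (hS : S ⊆ S')
    (hS'V : S' ⊆ V) (hWW' : ∀ u c, c ∉ S' → W u c ≤ W' u c) (hW' : ∀ u c, 0 ≤ W' u c) :
    FullInf V W' b S' :=
  (fullInf_iff_subset_finalActive V W' b hS'V).2 <|
    h.symm.subset.trans (activeSet_subset_activeSet V W b hS hWW' hW' _)

lemma minSeed_le_card {S : Finset ι} (hSV : S ⊆ V) (hS : FullInf V W b S) :
    minSeed V W b ≤ S.card :=
  Nat.sInf_le ⟨S, hSV, rfl, hS⟩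

lemma exists_fullInf_card_eq_minSeed :
    ∃ S ⊆ V, S.card = minSeed V W b ∧ FullInf V W b S :=
  Nat.sInf_mem (s := {n | ∃ S : Finset ι, S ⊆ V ∧ S.card = n ∧ FullInf V W b S})
    ⟨V.card, V, subset_rfl, rfl, fullInf_self V W b⟩

end Diffusion

theorem minSeed_add_single_edge_general {ι : Type*} [DecidableEq ι]
    (V : Finset ι) (W W' : ι → ι → ℝ) (b : ι → ℝ)
    (hW : ∀ u v, 0 ≤ W u v)
    (v₁ v₂ : ι) (hv₂ : v₂ ∈ V)
    (h₁ : W v₁ v₂ = 0)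
    (w : ℝ) (hw : 0 < w) (hW' : W' v₁ v₂ = w)
    (hagree : ∀ a c : ι, ¬(a = v₁ ∧ c = v₂) → W' a c = W a c) :
    minSeed V W' b ≤ minSeed V W b ∧
      minSeed V W b ≤ minSeed V W' b + 1 := by
  have hle : ∀ u c, W u c ≤ W' u c := fun u c => by
    by_cases h : u = v₁ ∧ c = v₂
    · rw [h.1, h.2, hW', h₁]; exact hw.le
    · rw [hagree u c h]
  have hW'_nonneg : ∀ u c, 0 ≤ W' u c := fun u c => (hW u c).trans (hle u c)
  constructor
  · obtain ⟨S, hSV, hS, hSfull⟩ := exists_fullInf_card_eq_minSeed V W b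
    rw [← hS]
    exact minSeed_le_card V W' b hSV
      (hSfull.mono V W b subset_rfl hSV (fun u c _ => hle u c) hW'_nonneg)
  · obtain ⟨S, hSV, hS, hSfull⟩ := exists_fullInf_card_eq_minSeed V W' b
    have hv₂SV : insert v₂ S ⊆ V := insert_subset hv₂ hSV
    have hfull : FullInf V W b (insert v₂ S) :=
      hSfull.mono V W' b (subset_insert v₂ S) hv₂SV
        (fun u c hc => (hagree u c fun h => hc (h.2 ▸ mem_insert_self c S)).le) hW
    calc minSeed V W b ≤ (insert v₂ S).card := minSeed_le_card V W b hv₂SV hfull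
      _ ≤ S.card + 1 := card_insert_le v₂ S
      _ = minSeed V W' b + 1 := by rw [hS]

/-- adding a single directed edge (between two nodes with no such
edge) decreases the minimum seed number by at most one. -/
theorem minSeed_add_single_edge {ι : Type*} [DecidableEq ι]
    (V : Finset ι) (W W' : ι → ι → ℝ) (b : ι → ℝ)
    (hW : ∀ u v, 0 ≤ W u v) (hb : ∀ u, 0 ≤ b u)
    (v₁ v₂ : ι) (hv₁ : v₁ ∈ V) (hv₂ : v₂ ∈ V) (hne : v₁ ≠ v₂)
    (h₁ : W v₁ v₂ = 0)
    (w : ℝ) (hw : 0 < w) (hW' : W' v₁ v₂ = w)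
    (hagree : ∀ a c : ι, ¬(a = v₁ ∧ c = v₂) → W' a c = W a c) :
    minSeed V W' b ≤ minSeed V W b ∧
      minSeed V W b ≤ minSeed V W' b + 1 :=
  minSeed_add_single_edge_general V W W' b hW v₁ v₂ hv₂ h₁ w hw hW' hagree
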